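/- arXiv:1008.3035 — 5 statements merged into one kernel-verified Lean document; each statement's English description precedes it below -/
import Mathlib

section
/- Let p > 0 and let f : ℝ → ℝ be an even function (f(−x) = f(x) for all x) that is periodic with period p (f(x + p) = f(x) for all x). Define 𝓘(ψ) = sSup { min( f(ψ + φ), f(ψ − φ) ) : φ ∈ ℝ }. Then for every β ∈ ℝ, 𝓘(p/4 + β) = 𝓘(p/4 − β). (Abstract form of the second symmetry relation of Proposition 2: the optimally rotated minimum mutual information 𝓘(|h|, ψ) = max_φ min{ I(Y₁;X₂), I(Y₂;X₁) } satisfies 𝓘(|h|, φ_per/4 + β) = 𝓘(|h|, φ_per/4 − β).) -/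
/-- Proposition 2, second symmetry relation (abstract form): for an even, p-periodic f,
the optimized quantity 𝓘(ψ) = sSup {min (f (ψ+φ)) (f (ψ−φ)) : φ ∈ ℝ} satisfies
𝓘(p/4 + β) = 𝓘(p/4 − β). -/
theorem stmt_4 (p : ℝ) (hp : 0 < p) (f : ℝ → ℝ)
    (heven : ∀ x, f (-x) = f x) (hper : ∀ x, f (x + p) = f x) (β : ℝ) :
    sSup {y : ℝ | ∃ φ : ℝ, y = min (f ((p / 4 + β) + φ)) (f ((p / 4 + β) - φ))} =
      sSup {y : ℝ | ∃ φ : ℝ, y = min (f ((p / 4 - β) + φ)) (f ((p / 4 - β) - φ))} := by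
  congr 1
  ext y
  constructor
  · rintro ⟨φ, rfl⟩
    refine ⟨φ - p / 2, ?_⟩
    have h1 : (p / 4 - β) + (φ - p / 2) = -((p / 4 + β) - φ) := by ring
    have h2 : (p / 4 - β) - (φ - p / 2) = -((p / 4 + β) + φ) + p := by ring
    rw [h1, h2, hper, heven, heven, min_comm]
  · rintro ⟨φ, rfl⟩
    refine ⟨φ + p / 2, ?_⟩
    have h1 : (p / 4 + β) + (φ + p / 2) = -((p / 4 - β) - φ) + p := by ring
    have h2 : (p / 4 + β) - (φ + p / 2) = -((p / 4 - β) + φ) := by ring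
    rw [h1, h2, hper, heven, heven, min_comm]
end

section
/- Let M ≥ 1, P > 0, let x₁, x₂ : Fin M → ℂ be finite constellations, let μ be a measure on ℂ, and define F(h) = log₂ M − (1/M²)·Σ_{k∈Fin M} Σ_{l∈Fin M} ∫_ℂ log₂( ( Σ_{k̃∈Fin M} Σ_{l̃∈Fin M} exp( −|(x₁ k − x₁ k̃) + (x₂ l − x₂ l̃)·h + z|²·P/2 ) ) / ( Σ_{k̃∈Fin M} exp( −|x₁ k − x₁ k̃ + z|²·P/2 ) ) ) dμ(z). Suppose there is a permutation σ of Fin M such that i·(x₂ l) = x₂(σ l) for all l (i.e., the constellation x₂ is invariant under rotation by π/2). Then F(i·h) = F(h) for every h ∈ ℂ. -/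
open scoped BigOperators
set_option maxHeartbeats 2000000

/-- Equation (6) as a function F of the complex interference gain h is periodic in the
interference phase with period π/2 whenever the constellation x₂ is invariant under
rotation by π/2 (multiplication by i): F(i·h) = F(h). -/
theorem stmt_10 (M : ℕ) (hM : 1 ≤ M) (P : ℝ) (hP : 0 < P)
    (x₁ x₂ : Fin M → ℂ) (μ : MeasureTheory.Measure ℂ)
    (F : ℂ → ℝ)
    (hF : ∀ h : ℂ, F h = Real.logb 2 M - (1 / (M : ℝ) ^ 2) *
      ∑ k : Fin M, ∑ l : Fin M, ∫ z : ℂ,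
        Real.logb 2
          ((∑ k' : Fin M, ∑ l' : Fin M,
              Real.exp (-(‖(x₁ k - x₁ k') + (x₂ l - x₂ l') * h + z‖) ^ 2 * P / 2)) /
            (∑ k' : Fin M,
              Real.exp (-(‖x₁ k - x₁ k' + z‖) ^ 2 * P / 2))) ∂μ)
    (σ : Equiv.Perm (Fin M)) (hσ : ∀ l, Complex.I * x₂ l = x₂ (σ l))
    (h : ℂ) : F (Complex.I * h) = F h := by
  have e : (∑ k : Fin M, ∑ l : Fin M, ∫ z : ℂ,
        Real.logb 2
          ((∑ k' : Fin M, ∑ l' : Fin M,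
              Real.exp (-(‖(x₁ k - x₁ k') + (x₂ l - x₂ l') * (Complex.I * h) + z‖) ^ 2 * P / 2)) /
            (∑ k' : Fin M,
              Real.exp (-(‖x₁ k - x₁ k' + z‖) ^ 2 * P / 2))) ∂μ)
      = ∑ k : Fin M, ∑ l : Fin M, ∫ z : ℂ,
        Real.logb 2
          ((∑ k' : Fin M, ∑ l' : Fin M,
              Real.exp (-(‖(x₁ k - x₁ k') + (x₂ l - x₂ l') * h + z‖) ^ 2 * P / 2)) /
            (∑ k' : Fin M,
              Real.exp (-(‖x₁ k - x₁ k' + z‖) ^ 2 * P / 2))) ∂μ := by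
    have key : ∀ (k k' l l' : Fin M) (z : ℂ),
        (x₁ k - x₁ k') + (x₂ l - x₂ l') * (Complex.I * h) + z
          = (x₁ k - x₁ k') + (x₂ (σ l) - x₂ (σ l')) * h + z := by
      intro k k' l l' z
      rw [← hσ l, ← hσ l']
      ring
    have num : ∀ (k l : Fin M) (z : ℂ),
        (∑ k' : Fin M, ∑ l' : Fin M,
            Real.exp (-(‖(x₁ k - x₁ k') + (x₂ l - x₂ l') * (Complex.I * h) + z‖) ^ 2 * P / 2))
          = ∑ k' : Fin M, ∑ l' : Fin M,
            Real.exp (-(‖(x₁ k - x₁ k') + (x₂ (σ l) - x₂ l') * h + z‖) ^ 2 * P / 2) := by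
      intro k l z
      refine Finset.sum_congr rfl fun k' _ => ?_
      calc (∑ l' : Fin M,
            Real.exp (-(‖(x₁ k - x₁ k') + (x₂ l - x₂ l') * (Complex.I * h) + z‖) ^ 2 * P / 2))
          = ∑ l' : Fin M,
            Real.exp (-(‖(x₁ k - x₁ k') + (x₂ (σ l) - x₂ (σ l')) * h + z‖) ^ 2 * P / 2) :=
            Finset.sum_congr rfl fun l' _ => by rw [key]
        _ = _ := Equiv.sum_comp σ fun l' =>
            Real.exp (-(‖(x₁ k - x₁ k') + (x₂ (σ l) - x₂ l') * h + z‖) ^ 2 * P / 2)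
    refine Finset.sum_congr rfl fun k _ => ?_
    have step : ∀ l : Fin M,
        (∫ z : ℂ,
          Real.logb 2
            ((∑ k' : Fin M, ∑ l' : Fin M,
                Real.exp (-(‖(x₁ k - x₁ k') + (x₂ l - x₂ l') * (Complex.I * h) + z‖) ^ 2 * P / 2)) /
              (∑ k' : Fin M,
                Real.exp (-(‖x₁ k - x₁ k' + z‖) ^ 2 * P / 2))) ∂μ)
        = ∫ z : ℂ,
          Real.logb 2
            ((∑ k' : Fin M, ∑ l' : Fin M,
                Real.exp (-(‖(x₁ k - x₁ k') + (x₂ (σ l) - x₂ l') * h + z‖) ^ 2 * P / 2)) /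
              (∑ k' : Fin M,
                Real.exp (-(‖x₁ k - x₁ k' + z‖) ^ 2 * P / 2))) ∂μ := by
      intro l
      refine MeasureTheory.integral_congr_ae (Filter.Eventually.of_forall fun z => ?_)
      simp only [num k l z]
    calc _ = ∑ l : Fin M, ∫ z : ℂ,
          Real.logb 2
            ((∑ k' : Fin M, ∑ l' : Fin M,
                Real.exp (-(‖(x₁ k - x₁ k') + (x₂ (σ l) - x₂ l') * h + z‖) ^ 2 * P / 2)) /
              (∑ k' : Fin M,
                Real.exp (-(‖x₁ k - x₁ k' + z‖) ^ 2 * P / 2))) ∂μ :=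
        Finset.sum_congr rfl fun l _ => step l
      _ = _ := Equiv.sum_comp σ fun l => ∫ z : ℂ,
          Real.logb 2
            ((∑ k' : Fin M, ∑ l' : Fin M,
                Real.exp (-(‖(x₁ k - x₁ k') + (x₂ l - x₂ l') * h + z‖) ^ 2 * P / 2)) /
              (∑ k' : Fin M,
                Real.exp (-(‖x₁ k - x₁ k' + z‖) ^ 2 * P / 2))) ∂μ
  rw [hF, hF, e]
end

section
/- Let M ≥ 1, P > 0, let x₁, x₂ : Fin M → ℂ be finite constellations, let μ be a measure on ℂ that is invariant under the complex conjugation map z ↦ z̄, and define F(h) = log₂ M − (1/M²)·Σ_{k∈Fin M} Σ_{l∈Fin M} ∫_ℂ log₂( ( Σ_{k̃∈Fin M} Σ_{l̃∈Fin M} exp( −|(x₁ k − x₁ k̃) + (x₂ l − x₂ l̃)·h + z|²·P/2 ) ) / ( Σ_{k̃∈Fin M} exp( −|x₁ k − x₁ k̃ + z|²·P/2 ) ) ) dμ(z). Suppose there are permutations σ₁, σ₂ of Fin M such that conj(x₁ k) = x₁(σ₁ k) and conj(x₂ l) = x₂(σ₂ l) for all k, l. Then F(h̄) = F(h) for every h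 ∈ ℂ, where h̄ is the complex conjugate of h. -/
open scoped BigOperators

set_option maxHeartbeats 1000000 in
/-- Equation (6) as a function F of the complex interference gain h is an even function of
the phase of h: if the noise measure μ is invariant under complex conjugation and both
constellations are invariant under complex conjugation, then F(conj h) = F(h). -/
theorem stmt_11 (M : ℕ) (hM : 1 ≤ M) (P : ℝ) (hP : 0 < P)
    (x₁ x₂ : Fin M → ℂ) (μ : MeasureTheory.Measure ℂ)
    (hμ : μ.map (fun z : ℂ => (starRingEnd ℂ) z) = μ)
    (F : ℂ → ℝ)
    (hF : ∀ h : ℂ, F h = Real.logb 2 M - (1 / (M : ℝ) ^ 2) *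
      ∑ k : Fin M, ∑ l : Fin M, ∫ z : ℂ,
        Real.logb 2
          ((∑ k' : Fin M, ∑ l' : Fin M,
              Real.exp (-(‖(x₁ k - x₁ k') + (x₂ l - x₂ l') * h + z‖) ^ 2 * P / 2)) /
            (∑ k' : Fin M,
              Real.exp (-(‖x₁ k - x₁ k' + z‖) ^ 2 * P / 2))) ∂μ)
    (σ₁ σ₂ : Equiv.Perm (Fin M))
    (hσ₁ : ∀ k, (starRingEnd ℂ) (x₁ k) = x₁ (σ₁ k))
    (hσ₂ : ∀ l, (starRingEnd ℂ) (x₂ l) = x₂ (σ₂ l))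
    (h : ℂ) : F ((starRingEnd ℂ) h) = F h := by
  have key : ∀ (f : ℂ → ℝ), ∫ z, f ((starRingEnd ℂ) z) ∂μ = ∫ z, f z ∂μ := by
    intro f
    let e : ℂ ≃ᵐ ℂ := (Complex.conjLIE.toHomeomorph).toMeasurableEquiv
    have he : μ.map e = μ := hμ
    calc ∫ z, f ((starRingEnd ℂ) z) ∂μ = ∫ z, f (e z) ∂μ := rfl
      _ = ∫ z, f z ∂(μ.map e) := (MeasureTheory.integral_map_equiv e f).symm
      _ = ∫ z, f z ∂μ := by rw [he]
  rw [hF, hF]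
  have hS : (∑ k : Fin M, ∑ l : Fin M, ∫ z : ℂ,
        Real.logb 2
          ((∑ k' : Fin M, ∑ l' : Fin M,
              Real.exp (-(‖(x₁ k - x₁ k') + (x₂ l - x₂ l') * ((starRingEnd ℂ) h) + z‖) ^ 2 * P / 2)) /
            (∑ k' : Fin M,
              Real.exp (-(‖x₁ k - x₁ k' + z‖) ^ 2 * P / 2))) ∂μ)
      = (∑ k : Fin M, ∑ l : Fin M, ∫ z : ℂ,
        Real.logb 2
          ((∑ k' : Fin M, ∑ l' : Fin M,
              Real.exp (-(‖(x₁ k - x₁ k') + (x₂ l - x₂ l') * h + z‖) ^ 2 * P / 2)) /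
            (∑ k' : Fin M,
              Real.exp (-(‖x₁ k - x₁ k' + z‖) ^ 2 * P / 2))) ∂μ) := by
    rw [← Equiv.sum_comp σ₁ (fun k => _)]
    refine Finset.sum_congr rfl fun k _ => ?_
    rw [← Equiv.sum_comp σ₂ (fun l => _)]
    refine Finset.sum_congr rfl fun l _ => ?_
    rw [← key (fun z => Real.logb 2
            ((∑ k' : Fin M, ∑ l' : Fin M,
                Real.exp (-(‖(x₁ k - x₁ k') + (x₂ l - x₂ l') * h + z‖) ^ 2 * P / 2)) /
              (∑ k' : Fin M,
                Real.exp (-(‖x₁ k - x₁ k' + z‖) ^ 2 * P / 2))))]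
    refine MeasureTheory.integral_congr_ae (Filter.EventuallyEq.of_eq (funext fun z => ?_))
    congr 1
    congr 1
    · rw [← Equiv.sum_comp σ₁ (fun k' => _)]
      refine Finset.sum_congr rfl fun k' _ => ?_
      rw [← Equiv.sum_comp σ₂ (fun l' => _)]
      refine Finset.sum_congr rfl fun l' _ => ?_
      congr 2
      rw [← Complex.norm_conj ((x₁ (σ₁ k) - x₁ (σ₁ k')) + (x₂ (σ₂ l) - x₂ (σ₂ l')) * ((starRingEnd ℂ) h) + z)]
      congr 1
      simp only [map_add, map_sub, map_mul, ← hσ₁, ← hσ₂, Complex.conj_conj]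
    · rw [← Equiv.sum_comp σ₁ (fun k' => _)]
      refine Finset.sum_congr rfl fun k' _ => ?_
      congr 2
      rw [← Complex.norm_conj (x₁ (σ₁ k) - x₁ (σ₁ k') + z)]
      congr 1
      simp only [map_add, map_sub, ← hσ₁, Complex.conj_conj]
  rw [hS]
end

section
/- Let M ≥ 1, P > 0, let x₁, x₂ : Fin M → ℂ be finite constellations, let μ be a measure on ℂ invariant under complex conjugation, and define F(h) = log₂ M − (1/M²)·Σ_{k∈Fin M} Σ_{l∈Fin M} ∫_ℂ log₂( ( Σ_{k̃∈Fin M} Σ_{l̃∈Fin M} exp( −|(x₁ k − x₁ k̃) + (x₂ l − x₂ l̃)·h + z|²·P/2 ) ) / ( Σ_{k̃∈Fin M} exp( −|x₁ k − x₁ k̃ + z|²·P/2 ) ) ) dμ(z). Suppose there are permutations σ₁, σ₂, τ of Fin M such that conj(x₁ k) = x₁(σ₁ k), conj(x₂ l) = x₂(σ₂ l), and i·(x₂ l) = x₂(τ l) for all k, l (i.e., both constellations are conjugation-invariant and x₂ is invariant under rotation by π/2). Then for every r ≥ 0 and every α ∈ ℝ, F( r·exp(i(π/4 + α)) ) = F(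 r·exp(i(π/4 − α)) ). (This is the concrete form of Proposition 1 for QAM constellations with φ_per = π/2: without transmitter rotation, the mutual information I(Y₁;X₂) takes the same values at channel phases ψ = φ_per/2 + α and ψ = φ_per/2 − α.) -/
set_option maxHeartbeats 1000000

open scoped BigOperators
open Real

/-- Proposition 1 in concrete form for QAM constellations (φ_per = π/2): without
transmitter rotation, the mutual information expression F of equation (6) takes the same
values at channel phases ψ = π/4 + α and ψ = π/4 − α. -/
theorem stmt_12 (M : ℕ) (hM : 1 ≤ M) (P : ℝ) (hP : 0 < P)
    (x₁ x₂ : Fin M → ℂ) (μ : MeasureTheory.Measure ℂ)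
    (hμ : μ.map (fun z : ℂ => (starRingEnd ℂ) z) = μ)
    (F : ℂ → ℝ)
    (hF : ∀ h : ℂ, F h = Real.logb 2 M - (1 / (M : ℝ) ^ 2) *
      ∑ k : Fin M, ∑ l : Fin M, ∫ z : ℂ,
        Real.logb 2
          ((∑ k' : Fin M, ∑ l' : Fin M,
              Real.exp (-(‖(x₁ k - x₁ k') + (x₂ l - x₂ l') * h + z‖) ^ 2 * P / 2)) /
            (∑ k' : Fin M,
              Real.exp (-(‖x₁ k - x₁ k' + z‖) ^ 2 * P / 2))) ∂μ)
    (σ₁ σ₂ τ : Equiv.Perm (Fin M))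
    (hσ₁ : ∀ k, (starRingEnd ℂ) (x₁ k) = x₁ (σ₁ k))
    (hσ₂ : ∀ l, (starRingEnd ℂ) (x₂ l) = x₂ (σ₂ l))
    (hτ : ∀ l, Complex.I * x₂ l = x₂ (τ l))
    (r : ℝ) (hr : 0 ≤ r) (α : ℝ) :
    F ((r : ℂ) * Complex.exp (Complex.I * ((π / 4 + α : ℝ) : ℂ))) =
      F ((r : ℂ) * Complex.exp (Complex.I * ((π / 4 - α : ℝ) : ℂ))) := by
  have h2 : ∀ m : Fin M, Complex.I * x₂ (τ.symm m) = x₂ m := fun m => by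
    rw [hτ, Equiv.apply_symm_apply]
  have hmap : ∀ g : ℂ → ℝ, Measurable g →
      (∫ z, g z ∂μ) = ∫ z, g ((starRingEnd ℂ) z) ∂μ := by
    intro g hg
    conv_lhs => rw [← hμ]
    exact MeasureTheory.integral_map
      (Complex.continuous_conj.measurable.aemeasurable) hg.aestronglyMeasurable
  have key : ∀ h : ℂ, F h = F (Complex.I * (starRingEnd ℂ) h) := by
    intro h
    rw [hF, hF]
    refine congrArg (fun t => Real.logb 2 (M : ℝ) - (1 / (M : ℝ) ^ 2) * t) ?_
    refine Fintype.sum_equiv σ₁ _ _ fun k => ?_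
    refine Fintype.sum_equiv (σ₂.trans τ.symm) _ _ fun l => ?_
    have hmeas : Measurable (fun z : ℂ => Real.logb 2
        ((∑ k' : Fin M, ∑ l' : Fin M,
            Real.exp (-(‖(x₁ k - x₁ k') + (x₂ l - x₂ l') * h + z‖) ^ 2 * P / 2)) /
          (∑ k' : Fin M,
            Real.exp (-(‖x₁ k - x₁ k' + z‖) ^ 2 * P / 2)))) := by
      have hterm : ∀ c : ℂ, Continuous fun z : ℂ =>
          Real.exp (-(‖c + z‖) ^ 2 * P / 2) := by
        intro c
        exact Real.continuous_exp.comp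
          ((((continuous_norm.comp (continuous_const.add continuous_id)).pow 2).neg.mul
            continuous_const).div_const 2)
      simp only [Real.logb]
      refine Measurable.div ?_ measurable_const
      refine Real.measurable_log.comp (Measurable.div ?_ ?_)
      · exact (continuous_finset_sum _ fun k' _ =>
          continuous_finset_sum _ fun l' _ => hterm _).measurable
      · exact (continuous_finset_sum _ fun k' _ => hterm _).measurable
    rw [hmap _ hmeas]
    refine MeasureTheory.integral_congr_ae (Filter.Eventually.of_forall fun z => ?_)
    have hnum : (∑ k' : Fin M, ∑ l' : Fin M,
        Real.exp (-(‖(x₁ k - x₁ k') + (x₂ l - x₂ l') * h + (starRingEnd ℂ) z‖) ^ 2 * P / 2))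
        = ∑ k' : Fin M, ∑ l' : Fin M,
        Real.exp (-(‖(x₁ (σ₁ k) - x₁ k') +
          (x₂ ((σ₂.trans τ.symm) l) - x₂ l') * (Complex.I * (starRingEnd ℂ) h) + z‖) ^ 2 * P / 2) := by
      refine Fintype.sum_equiv σ₁ _ _ fun k' => ?_
      refine Fintype.sum_equiv (σ₂.trans τ.symm) _ _ fun l' => ?_
      have habs : ‖(x₁ k - x₁ k') + (x₂ l - x₂ l') * h + (starRingEnd ℂ) z‖
          = ‖(x₁ (σ₁ k) - x₁ (σ₁ k')) +
            (x₂ ((σ₂.trans τ.symm) l) - x₂ ((σ₂.trans τ.symm) l')) * (Complex.I * (starRingEnd ℂ) h) + z‖ := by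
        rw [← Complex.norm_conj ((x₁ k - x₁ k') + (x₂ l - x₂ l') * h + (starRingEnd ℂ) z)]
        congr 1
        rw [map_add, map_add, map_sub, map_mul, map_sub, Complex.conj_conj,
          hσ₁, hσ₁, hσ₂, hσ₂]
        simp only [Equiv.trans_apply]
        linear_combination ((starRingEnd ℂ) h) * h2 (σ₂ l') - ((starRingEnd ℂ) h) * h2 (σ₂ l)
      rw [habs]
    have hden : (∑ k' : Fin M,
        Real.exp (-(‖x₁ k - x₁ k' + (starRingEnd ℂ) z‖) ^ 2 * P / 2))
        = ∑ k' : Fin M,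
        Real.exp (-(‖x₁ (σ₁ k) - x₁ k' + z‖) ^ 2 * P / 2) := by
      refine Fintype.sum_equiv σ₁ _ _ fun k' => ?_
      have habs : ‖x₁ k - x₁ k' + (starRingEnd ℂ) z‖
          = ‖x₁ (σ₁ k) - x₁ (σ₁ k') + z‖ := by
        rw [← Complex.norm_conj (x₁ k - x₁ k' + (starRingEnd ℂ) z)]
        congr 1
        rw [map_add, map_sub, Complex.conj_conj, hσ₁, hσ₁]
      rw [habs]
    beta_reduce
    rw [hnum, hden]
  rw [key]
  congr 1
  have h1 : (starRingEnd ℂ) ((r : ℂ) * Complex.exp (Complex.I * ((π / 4 + α : ℝ) : ℂ)))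
      = (r : ℂ) * Complex.exp (-(Complex.I * ((π / 4 + α : ℝ) : ℂ))) := by
    rw [map_mul, Complex.conj_ofReal, ← Complex.exp_conj, map_mul, Complex.conj_I,
      Complex.conj_ofReal]
    ring_nf
  have hI : Complex.exp (Complex.I * ((π / 2 : ℝ) : ℂ)) = Complex.I := by
    rw [mul_comm, Complex.exp_mul_I, ← Complex.ofReal_cos, ← Complex.ofReal_sin,
      Real.cos_pi_div_two, Real.sin_pi_div_two]
    simp
  have h3 : Complex.I * Complex.exp (-(Complex.I * ((π / 4 + α : ℝ) : ℂ)))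
      = Complex.exp (Complex.I * ((π / 4 - α : ℝ) : ℂ)) := by
    calc Complex.I * Complex.exp (-(Complex.I * ((π / 4 + α : ℝ) : ℂ)))
        = Complex.exp (Complex.I * ((π / 2 : ℝ) : ℂ)) *
            Complex.exp (-(Complex.I * ((π / 4 + α : ℝ) : ℂ))) := by rw [hI]
      _ = Complex.exp (Complex.I * ((π / 2 : ℝ) : ℂ) + -(Complex.I * ((π / 4 + α : ℝ) : ℂ))) :=
            (Complex.exp_add _ _).symm
      _ = Complex.exp (Complex.I * ((π / 4 - α : ℝ) : ℂ)) := by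
            congr 1; push_cast; ring
  rw [h1, ← mul_assoc, mul_comm Complex.I ((r : ℂ)), mul_assoc, h3]
end

section
/- Let M ≥ 1, P > 0, let x₁, x₂ : Fin M → ℂ be finite constellations, let μ be a measure on ℂ invariant under complex conjugation, and define F(h) = log₂ M − (1/M²)·Σ_{k∈Fin M} Σ_{l∈Fin M} ∫_ℂ log₂( ( Σ_{k̃∈Fin M} Σ_{l̃∈Fin M} exp( −|(x₁ k − x₁ k̃) + (x₂ l − x₂ l̃)·h + z|²·P/2 ) ) / ( Σ_{k̃∈Fin M} exp( −|x₁ k − x₁ k̃ + z|²·P/2 ) ) ) dμ(z). Suppose there are permutations σ₁, σ₂, τ of Fin M such that conj(x₁ k) = x₁(σ₁ k), conj(x₂ l) = x₂(σ₂ l), and i·(x₂ l) = x₂(τ l) for all k, l. For r ≥ 0 define 𝓘(r, ψ) = sSup { min( F(r·exp(i(ψ + φ))), F(r·exp(i(ψ − φ))) ) : φ ∈ ℝ }. Then for every r ≥ 0 and all α, β ∈ ℝ: 𝓘(r, π/4 + α) = 𝓘(r, π/4 − α) and 𝓘(r, π/8 + β) = 𝓘(r, π/8 − β). (This is Proposition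 2 in concrete form for QAM constellations with φ_per = π/2: the optimally rotated minimum mutual information 𝓘(|h|, ψ) = max_φ min{ I(Y₁;X₂), I(Y₂;X₁) } satisfies 𝓘(|h|, φ_per/2 + α) = 𝓘(|h|, φ_per/2 − α) and 𝓘(|h|, φ_per/4 + β) = 𝓘(|h|, φ_per/4 − β).) -/
open scoped BigOperators
open Real

set_option maxHeartbeats 1000000

/-- Complex conjugation as a measurable equivalence. -/
noncomputable def conjME : ℂ ≃ᵐ ℂ where
  toFun := fun z => (starRingEnd ℂ) z
  invFun := fun z => (starRingEnd ℂ) z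
  left_inv := fun z => by simp
  right_inv := fun z => by simp
  measurable_toFun := continuous_star.measurable
  measurable_invFun := continuous_star.measurable

lemma integral_conj_inv (μ : MeasureTheory.Measure ℂ)
    (hμ : μ.map (fun z : ℂ => (starRingEnd ℂ) z) = μ) (f : ℂ → ℝ) :
    ∫ z, f z ∂μ = ∫ z, f ((starRingEnd ℂ) z) ∂μ := by
  conv_lhs => rw [← hμ]
  exact MeasureTheory.integral_map_equiv conjME f

/-- Proposition 2 in concrete form for QAM constellations (φ_per = π/2): the optimally
rotated minimum mutual information 𝓘(r, ψ) = sup_φ min(F(r·e^{i(ψ+φ)}), F(r·e^{i(ψ−φ)}))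
satisfies 𝓘(r, π/4 + α) = 𝓘(r, π/4 − α) and 𝓘(r, π/8 + β) = 𝓘(r, π/8 − β). -/
theorem stmt_13 (M : ℕ) (hM : 1 ≤ M) (P : ℝ) (hP : 0 < P)
    (x₁ x₂ : Fin M → ℂ) (μ : MeasureTheory.Measure ℂ)
    (hμ : μ.map (fun z : ℂ => (starRingEnd ℂ) z) = μ)
    (F : ℂ → ℝ)
    (hF : ∀ h : ℂ, F h = Real.logb 2 M - (1 / (M : ℝ) ^ 2) *
      ∑ k : Fin M, ∑ l : Fin M, ∫ z : ℂ,
        Real.logb 2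
          ((∑ k' : Fin M, ∑ l' : Fin M,
              Real.exp (-(‖(x₁ k - x₁ k') + (x₂ l - x₂ l') * h + z‖) ^ 2 * P / 2)) /
            (∑ k' : Fin M,
              Real.exp (-(‖x₁ k - x₁ k' + z‖) ^ 2 * P / 2))) ∂μ)
    (σ₁ σ₂ τ : Equiv.Perm (Fin M))
    (hσ₁ : ∀ k, (starRingEnd ℂ) (x₁ k) = x₁ (σ₁ k))
    (hσ₂ : ∀ l, (starRingEnd ℂ) (x₂ l) = x₂ (σ₂ l))
    (hτ : ∀ l, Complex.I * x₂ l = x₂ (τ l))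
    (𝓘 : ℝ → ℝ → ℝ)
    (h𝓘 : ∀ r ψ : ℝ, 𝓘 r ψ =
      sSup {y : ℝ | ∃ φ : ℝ, y =
        min (F ((r : ℂ) * Complex.exp (Complex.I * ((ψ + φ : ℝ) : ℂ))))
            (F ((r : ℂ) * Complex.exp (Complex.I * ((ψ - φ : ℝ) : ℂ))))})
    (r : ℝ) (hr : 0 ≤ r) (α β : ℝ) :
    𝓘 r (π / 4 + α) = 𝓘 r (π / 4 - α) ∧ 𝓘 r (π / 8 + β) = 𝓘 r (π / 8 - β) := by
  -- F is invariant under conjugation of h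
  have hFconj : ∀ h : ℂ, F ((starRingEnd ℂ) h) = F h := by
    intro h
    rw [hF, hF]
    refine congrArg (fun t => Real.logb 2 (M : ℝ) - 1 / (M : ℝ) ^ 2 * t) ?_
    refine Fintype.sum_equiv σ₁ _ _ (fun k => ?_)
    refine Fintype.sum_equiv σ₂ _ _ (fun l => ?_)
    rw [integral_conj_inv μ hμ]
    refine MeasureTheory.integral_congr_ae (Filter.Eventually.of_forall fun z => ?_)
    have hnum : (∑ k' : Fin M, ∑ l' : Fin M,
        Real.exp (-(‖(x₁ k - x₁ k') + (x₂ l - x₂ l') * ((starRingEnd ℂ) h)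
          + ((starRingEnd ℂ) z)‖) ^ 2 * P / 2))
        = ∑ k' : Fin M, ∑ l' : Fin M,
        Real.exp (-(‖(x₁ (σ₁ k) - x₁ k') + (x₂ (σ₂ l) - x₂ l') * h + z‖) ^ 2
          * P / 2) := by
      refine Fintype.sum_equiv σ₁ _ _ (fun k' => ?_)
      refine Fintype.sum_equiv σ₂ _ _ (fun l' => ?_)
      have hc : (starRingEnd ℂ) ((x₁ k - x₁ k') + (x₂ l - x₂ l') * (starRingEnd ℂ) h
            + (starRingEnd ℂ) z)
          = (x₁ (σ₁ k) - x₁ (σ₁ k')) + (x₂ (σ₂ l) - x₂ (σ₂ l')) * h + z := by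
        simp only [map_add, map_sub, map_mul, Complex.conj_conj, hσ₁, hσ₂]
      rw [← hc, Complex.norm_conj]
    have hden : (∑ k' : Fin M,
        Real.exp (-(‖x₁ k - x₁ k' + (starRingEnd ℂ) z‖) ^ 2 * P / 2))
        = ∑ k' : Fin M,
        Real.exp (-(‖x₁ (σ₁ k) - x₁ k' + z‖) ^ 2 * P / 2) := by
      refine Fintype.sum_equiv σ₁ _ _ (fun k' => ?_)
      have hc : (starRingEnd ℂ) (x₁ k - x₁ k' + (starRingEnd ℂ) z)
          = x₁ (σ₁ k) - x₁ (σ₁ k') + z := by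
        simp only [map_add, map_sub, Complex.conj_conj, hσ₁]
      rw [← hc, Complex.norm_conj]
    show Real.logb 2 _ = Real.logb 2 _
    rw [hnum, hden]
  -- F is invariant under multiplying h by I
  have hFI : ∀ h : ℂ, F (Complex.I * h) = F h := by
    intro h
    rw [hF, hF]
    refine congrArg (fun t => Real.logb 2 (M : ℝ) - 1 / (M : ℝ) ^ 2 * t) ?_
    refine Finset.sum_congr rfl (fun k _ => ?_)
    refine Fintype.sum_equiv τ _ _ (fun l => ?_)
    refine MeasureTheory.integral_congr_ae (Filter.Eventually.of_forall fun z => ?_)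
    have hnum : (∑ k' : Fin M, ∑ l' : Fin M,
        Real.exp (-(‖(x₁ k - x₁ k') + (x₂ l - x₂ l') * (Complex.I * h) + z‖) ^ 2
          * P / 2))
        = ∑ k' : Fin M, ∑ l' : Fin M,
        Real.exp (-(‖(x₁ k - x₁ k') + (x₂ (τ l) - x₂ l') * h + z‖) ^ 2
          * P / 2) := by
      refine Finset.sum_congr rfl (fun k' _ => ?_)
      refine Fintype.sum_equiv τ _ _ (fun l' => ?_)
      have hc : (x₂ l - x₂ l') * (Complex.I * h) = (x₂ (τ l) - x₂ (τ l')) * h := by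
        rw [← hτ l, ← hτ l']; ring
      rw [hc]
    show Real.logb 2 _ = Real.logb 2 _
    rw [hnum]
  -- the function of the angle
  set G : ℝ → ℝ := fun θ => F ((r : ℂ) * Complex.exp (Complex.I * (θ : ℂ))) with hG
  have hGeven : ∀ θ : ℝ, G (-θ) = G θ := by
    intro θ
    have hc : (starRingEnd ℂ) ((r : ℂ) * Complex.exp (Complex.I * (θ : ℂ)))
        = (r : ℂ) * Complex.exp (Complex.I * ((-θ : ℝ) : ℂ)) := by
      rw [map_mul, Complex.conj_ofReal, ← Complex.exp_conj]
      congr 2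
      simp only [map_mul, Complex.conj_I, Complex.conj_ofReal, Complex.ofReal_neg]
      ring
    simp only [hG]
    rw [← hc, hFconj]
  have hGper : ∀ θ : ℝ, G (θ + π / 2) = G θ := by
    intro θ
    have h1 : Complex.exp (Complex.I * ((π / 2 : ℝ) : ℂ)) = Complex.I := by
      rw [mul_comm, Complex.exp_mul_I, ← Complex.ofReal_cos, ← Complex.ofReal_sin,
        Real.cos_pi_div_two, Real.sin_pi_div_two]
      simp
    have hc : (r : ℂ) * Complex.exp (Complex.I * ((θ + π / 2 : ℝ) : ℂ))
        = Complex.I * ((r : ℂ) * Complex.exp (Complex.I * (θ : ℂ))) := by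
      have harg : Complex.I * ((θ + π / 2 : ℝ) : ℂ)
          = Complex.I * (θ : ℂ) + Complex.I * ((π / 2 : ℝ) : ℂ) := by
        push_cast; ring
      rw [harg, Complex.exp_add, h1]
      ring
    simp only [hG]
    rw [hc, hFI]
  -- rewrite 𝓘 using G
  have h𝓘' : ∀ ρ : ℝ, 𝓘 r ρ = sSup {y : ℝ | ∃ φ : ℝ, y = min (G (ρ + φ)) (G (ρ - φ))} :=
    fun ρ => h𝓘 r ρ
  have keyEven : ∀ ψ : ℝ, 𝓘 r (-ψ) = 𝓘 r ψ := by
    intro ψ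
    rw [h𝓘', h𝓘']
    congr 1
    ext y
    simp only [Set.mem_setOf_eq]
    constructor
    · rintro ⟨φ, rfl⟩
      refine ⟨φ, ?_⟩
      rw [show -ψ + φ = -(ψ - φ) by ring, show -ψ - φ = -(ψ + φ) by ring,
        hGeven, hGeven, min_comm]
    · rintro ⟨φ, rfl⟩
      refine ⟨φ, ?_⟩
      rw [show -ψ + φ = -(ψ - φ) by ring, show -ψ - φ = -(ψ + φ) by ring,
        hGeven, hGeven, min_comm]
  have keyShift : ∀ ψ : ℝ, 𝓘 r (ψ + π / 4) = 𝓘 r ψ := by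
    intro ψ
    rw [h𝓘', h𝓘']
    congr 1
    ext y
    simp only [Set.mem_setOf_eq]
    constructor
    · rintro ⟨φ, rfl⟩
      refine ⟨φ - π / 4, ?_⟩
      rw [show ψ + π / 4 + φ = (ψ + (φ - π / 4)) + π / 2 by ring, hGper,
        show ψ + π / 4 - φ = ψ - (φ - π / 4) by ring]
    · rintro ⟨φ, rfl⟩
      refine ⟨φ + π / 4, ?_⟩
      rw [show ψ + π / 4 + (φ + π / 4) = (ψ + φ) + π / 2 by ring, hGper,
        show ψ + π / 4 - (φ + π / 4) = ψ - φ by ring]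
  constructor
  · calc 𝓘 r (π / 4 + α) = 𝓘 r (-(π / 4 + α)) := (keyEven _).symm
      _ = 𝓘 r (-(π / 4 + α) + π / 4) := (keyShift _).symm
      _ = 𝓘 r (-(π / 4 + α) + π / 4 + π / 4) := (keyShift _).symm
      _ = 𝓘 r (π / 4 - α) := by rw [show -(π / 4 + α) + π / 4 + π / 4 = π / 4 - α by ring]
  · calc 𝓘 r (π / 8 + β) = 𝓘 r (-(π / 8 + β)) := (keyEven _).symm
      _ = 𝓘 r (-(π / 8 + β) + π / 4) := (keyShift _).symm
      _ = 𝓘 r (π / 8 - β) := by rw [show -(π / 8 + β) + π / 4 = π / 8 - β by ring]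
end
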